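/- arXiv:2411.03909 — 3 statements merged into one kernel-verified Lean document; each statement's English description precedes it below -/
import Mathlib

section
/- Let A ∈ ℝ^{n×n}, B ∈ ℝ^{n×m}, C ∈ ℝ^{p×n}, and let u, x, y satisfy x(t+1) = A·x(t) + B·u(t) and y(t) = C·x(t) for all t. Fix L ≥ 1 and suppose 𝒪_Lᵀ𝒪_L is invertible (i.e., the extended observability matrix 𝒪_L has full column rank n), and set 𝒪_L† = (𝒪_Lᵀ𝒪_L)⁻¹𝒪_Lᵀ. Then for every t ≥ L, x(t) = (𝒞_L − A^L·𝒪_L†·𝒯_L)·u_{t,L} + A^L·𝒪_L†·y_{t,L}, where u_{t,L} = (u(t−1), …, u(t−L)) ∈ ℝ^{mL} and y_{t,L} = (y(t−1), …, y(t−L)) ∈ ℝ^{pL} are the stacked past inputs and outputs ordered with the most recent sample first. -/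
open Matrix Finset

/-- Extended observability matrix `𝒪_L = [C A^{L−1}; …; C A; C]`
(block row `i` is `C * A ^ (L - 1 - i)`). -/
def obsMat (n p L : ℕ) (A : Matrix (Fin n) (Fin n) ℝ) (C : Matrix (Fin p) (Fin n) ℝ) :
    Matrix (Fin L × Fin p) (Fin n) ℝ :=
  fun ia j => (C * A ^ (L - 1 - (ia.1 : ℕ))) ia.2 j

/-- Controllability matrix `𝒞_L = [B, A B, …, A^{L−1} B]`. -/
def ctrbMat (n m L : ℕ) (A : Matrix (Fin n) (Fin n) ℝ) (B : Matrix (Fin n) (Fin m) ℝ) :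
    Matrix (Fin n) (Fin L × Fin m) ℝ :=
  fun i jb => (A ^ (jb.1 : ℕ) * B) i jb.2

/-- Impulse-response Toeplitz matrix `𝒯_L`: block `(i,j)` equals `C A^{j−i−1} B` if `j > i`
and `0` otherwise (`0`-indexed blocks). -/
def toepMat (n m p L : ℕ) (A : Matrix (Fin n) (Fin n) ℝ) (B : Matrix (Fin n) (Fin m) ℝ)
    (C : Matrix (Fin p) (Fin n) ℝ) :
    Matrix (Fin L × Fin p) (Fin L × Fin m) ℝ :=
  fun ia jb =>
    if (ia.1 : ℕ) < (jb.1 : ℕ) then (C * A ^ ((jb.1 : ℕ) - (ia.1 : ℕ) - 1) * B) ia.2 jb.2 else 0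

/-- Stacked past inputs `u_{t,L} = (u(t−1), …, u(t−L))`, most recent first. -/
def uStack (m L : ℕ) (u : ℕ → Fin m → ℝ) (t : ℕ) : Fin L × Fin m → ℝ :=
  fun jb => u (t - 1 - (jb.1 : ℕ)) jb.2

/-- Stacked past outputs `y_{t,L} = (y(t−1), …, y(t−L))`, most recent first. -/
def yStack (p L : ℕ) (y : ℕ → Fin p → ℝ) (t : ℕ) : Fin L × Fin p → ℝ :=
  fun jc => y (t - 1 - (jc.1 : ℕ)) jc.2

/-! Unrolling the recursion over the window `[t - L, t)` gives
`x t = A ^ L x (t - L) + 𝒞_L u_{t,L}` and `y_{t,L} = 𝒪_L x (t - L) + 𝒯_L u_{t,L}`.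
As `(𝒪_Lᵀ 𝒪_L)⁻¹ 𝒪_Lᵀ` is a left inverse of `𝒪_L`, the second identity recovers `x (t - L)`
from the past inputs and outputs, and substituting it into the first gives the formula. -/

theorem trajectory_eq_pow_mulVec_add_sum {R ι κ : Type*} [Semiring R] [Fintype ι]
    [DecidableEq ι] [Fintype κ] (A : Matrix ι ι R) (B : Matrix ι κ R)
    (u : ℕ → κ → R) (x : ℕ → ι → R) (hdyn : ∀ t, x (t + 1) = A *ᵥ x t + B *ᵥ u t) (s k : ℕ) :
    x (s + k) = (A ^ k) *ᵥ x s + ∑ j ∈ range k, (A ^ j * B) *ᵥ u (s + k - 1 - j) := by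
  induction k with
  | zero => simp
  | succ k ih =>
    have shift : ∀ j ∈ range k, A *ᵥ ((A ^ j * B) *ᵥ u (s + k - 1 - j))
        = (A ^ (j + 1) * B) *ᵥ u (s + k + 1 - 1 - (j + 1)) := fun j _ => by
      rw [mulVec_mulVec, ← Matrix.mul_assoc, ← pow_succ']
      congr 2
      omega
    rw [← add_assoc, hdyn, ih, mulVec_add, mulVec_sum, sum_congr rfl shift, mulVec_mulVec,
      ← pow_succ', sum_range_succ' _ k, pow_zero, Matrix.one_mul, Nat.add_sub_cancel, Nat.sub_zero]
    abel

theorem ctrbMat_mulVec_uStack (n m L : ℕ) (A : Matrix (Fin n) (Fin n) ℝ)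
    (B : Matrix (Fin n) (Fin m) ℝ) (u : ℕ → Fin m → ℝ) (t : ℕ) :
    ctrbMat n m L A B *ᵥ uStack m L u t = ∑ j ∈ range L, (A ^ j * B) *ᵥ u (t - 1 - j) := by
  ext i
  rw [Finset.sum_apply, ← Fin.sum_univ_eq_sum_range (fun j => ((A ^ j * B) *ᵥ u (t - 1 - j)) i)]
  exact Fintype.sum_prod_type _

theorem toepMat_mulVec_uStack_apply (n m p L : ℕ) (A : Matrix (Fin n) (Fin n) ℝ)
    (B : Matrix (Fin n) (Fin m) ℝ) (C : Matrix (Fin p) (Fin n) ℝ) (u : ℕ → Fin m → ℝ) (t : ℕ)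
    (i : Fin L) (a : Fin p) :
    (toepMat n m p L A B C *ᵥ uStack m L u t) (i, a)
      = ∑ j ∈ range (L - 1 - i), ((C * A ^ j * B) *ᵥ u (t - 1 - (i + 1 + j))) a := by
  have row : ∀ j : Fin L, ∑ b, toepMat n m p L A B C (i, a) (j, b) * uStack m L u t (j, b)
      = if (i : ℕ) < j then ((C * A ^ ((j : ℕ) - i - 1) * B) *ᵥ u (t - 1 - j)) a else 0 := by
    intro j
    simp only [toepMat, uStack]
    split_ifs <;> simp [mulVec, dotProduct]
  have window : (range L).filter (fun j => (i : ℕ) < j) = Ico ((i : ℕ) + 1) L := by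
    ext j
    simp only [mem_filter, mem_range, mem_Ico]
    omega
  rw [mulVec, dotProduct, Fintype.sum_prod_type, sum_congr rfl fun j _ => row j,
    Fin.sum_univ_eq_sum_range (fun j => if (i : ℕ) < j then
      ((C * A ^ (j - i - 1) * B) *ᵥ u (t - 1 - j)) a else 0), ← sum_filter, window,
    sum_Ico_eq_sum_range, show L - (i + 1) = L - 1 - i by omega]
  refine sum_congr rfl fun j _ => ?_
  rw [show (i : ℕ) + 1 + j - i - 1 = j by omega]

theorem yStack_eq_obsMat_mulVec_add_toepMat_mulVec (n m p L : ℕ)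
    (A : Matrix (Fin n) (Fin n) ℝ) (B : Matrix (Fin n) (Fin m) ℝ) (C : Matrix (Fin p) (Fin n) ℝ)
    (u : ℕ → Fin m → ℝ) (x : ℕ → Fin n → ℝ) (y : ℕ → Fin p → ℝ)
    (hdyn : ∀ t, x (t + 1) = A *ᵥ x t + B *ᵥ u t) (hout : ∀ t, y t = C *ᵥ x t) (s : ℕ) :
    yStack p L y (s + L)
      = obsMat n p L A C *ᵥ x s + toepMat n m p L A B C *ᵥ uStack m L u (s + L) := by
  ext ⟨i, a⟩
  have hi : s + L - 1 - i = s + (L - 1 - i) := by have := i.isLt; omega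
  have obs : (obsMat n p L A C *ᵥ x s) (i, a) = ((C * A ^ (L - 1 - i)) *ᵥ x s) a := rfl
  simp only [yStack, Pi.add_apply, obs, toepMat_mulVec_uStack_apply]
  rw [hi, hout, trajectory_eq_pow_mulVec_add_sum A B u x hdyn, mulVec_add, mulVec_sum,
    Pi.add_apply, Finset.sum_apply, mulVec_mulVec]
  congr 1
  refine sum_congr rfl fun j _ => ?_
  rw [mulVec_mulVec, ← Matrix.mul_assoc,
    show s + L - 1 - (i + 1 + j) = s + (L - 1 - i) - 1 - j by omega]

theorem state_from_past_input_output_general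
    (n m p L : ℕ)
    (A : Matrix (Fin n) (Fin n) ℝ) (B : Matrix (Fin n) (Fin m) ℝ)
    (C : Matrix (Fin p) (Fin n) ℝ)
    (u : ℕ → Fin m → ℝ) (x : ℕ → Fin n → ℝ) (y : ℕ → Fin p → ℝ)
    (hdyn : ∀ t : ℕ, x (t + 1) = A.mulVec (x t) + B.mulVec (u t))
    (hout : ∀ t : ℕ, y t = C.mulVec (x t))
    (hObs : IsUnit ((obsMat n p L A C)ᵀ * obsMat n p L A C)) :
    ∀ t : ℕ, L ≤ t →
      x t =
        (ctrbMat n m L A B -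
            A ^ L * (((obsMat n p L A C)ᵀ * obsMat n p L A C)⁻¹ * (obsMat n p L A C)ᵀ) *
              toepMat n m p L A B C).mulVec (uStack m L u t) +
          (A ^ L * (((obsMat n p L A C)ᵀ * obsMat n p L A C)⁻¹ * (obsMat n p L A C)ᵀ)).mulVec
            (yStack p L y t) := by
  intro t ht
  obtain ⟨s, rfl⟩ : ∃ s, t = s + L := ⟨t - L, by omega⟩
  have left_inv : ((obsMat n p L A C)ᵀ * obsMat n p L A C)⁻¹ * (obsMat n p L A C)ᵀ *
      obsMat n p L A C = 1 := by
    rw [Matrix.mul_assoc, nonsing_inv_mul _ ((isUnit_iff_isUnit_det _).mp hObs)]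
  have hx : x (s + L) = A ^ L *ᵥ x s + ctrbMat n m L A B *ᵥ uStack m L u (s + L) := by
    rw [trajectory_eq_pow_mulVec_add_sum A B u x hdyn, ctrbMat_mulVec_uStack]
  rw [hx, yStack_eq_obsMat_mulVec_add_toepMat_mulVec n m p L A B C u x y hdyn hout, sub_mulVec,
    mulVec_add, mulVec_mulVec, mulVec_mulVec, Matrix.mul_assoc (A ^ L) _ (obsMat n p L A C),
    left_inv, Matrix.mul_one]
  abel

theorem state_from_past_input_output
    (n m p L : ℕ) (hL : 1 ≤ L)
    (A : Matrix (Fin n) (Fin n) ℝ) (B : Matrix (Fin n) (Fin m) ℝ)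
    (C : Matrix (Fin p) (Fin n) ℝ)
    (u : ℕ → Fin m → ℝ) (x : ℕ → Fin n → ℝ) (y : ℕ → Fin p → ℝ)
    (hdyn : ∀ t : ℕ, x (t + 1) = A.mulVec (x t) + B.mulVec (u t))
    (hout : ∀ t : ℕ, y t = C.mulVec (x t))
    (hObs : IsUnit ((obsMat n p L A C)ᵀ * obsMat n p L A C)) :
    ∀ t : ℕ, L ≤ t →
      x t =
        (ctrbMat n m L A B -
            A ^ L * (((obsMat n p L A C)ᵀ * obsMat n p L A C)⁻¹ * (obsMat n p L A C)ᵀ) *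
              toepMat n m p L A B C).mulVec (uStack m L u t) +
          (A ^ L * (((obsMat n p L A C)ᵀ * obsMat n p L A C)⁻¹ * (obsMat n p L A C)ᵀ)).mulVec
            (yStack p L y t) :=
  state_from_past_input_output_general n m p L A B C u x y hdyn hout hObs
end

section
/- Let A ∈ ℝ^{n×n}, B ∈ ℝ^{n×m}, C ∈ ℝ^{p×n}, and let u, x, y satisfy x(t+1) = A·x(t) + B·u(t) and y(t) = C·x(t) for all t. Fix L ≥ 1 and sample times t_1, …, t_N with t_k ≥ L for all k. Then the matrix D ∈ ℝ^{(m(L+1)+pL)×N} whose k-th column is the vector (u(t_k), ξ_{t_k}) = (u(t_k), u_{t_k,L}, y_{t_k,L}) has rank at most m(L+1) + n. In particular, if p·L > n, this matrix never has full row rank. -/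
open Matrix Finset

/-- The non-minimal state `ξ_t = (u_{t,L}, y_{t,L})`. -/
def xiState (m p L : ℕ) (u : ℕ → Fin m → ℝ) (y : ℕ → Fin p → ℝ) (t : ℕ) :
    (Fin L × Fin m) ⊕ (Fin L × Fin p) → ℝ :=
  Sum.elim (uStack m L u t) (yStack p L y t)

/-! Each column `(u(t), ξ_t)` is the image of `(u(t), u_{t,L}, x(t-L))` under one fixed linear map:
`y(t-1-j) = C x(t-1-j)`, and `x(t-1-j)` is determined by `x(t-L)` and the inputs
`u(t-L), …, u(t-2-j)`, all of which are entries of `u_{t,L}`. So the column space of the data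
matrix lies in the range of a linear map out of a space of dimension `m + mL + n`. -/

theorem Matrix.rank_le_finrank_of_col_mem_range {R V ι κ : Type*} [Field R] [Fintype ι]
    [Fintype κ] [AddCommGroup V] [Module R V] [FiniteDimensional R V]
    (D : Matrix ι κ R) (Φ : V →ₗ[R] ι → R) (h : ∀ k, D.col k ∈ LinearMap.range Φ) :
    D.rank ≤ Module.finrank R V := by
  rw [rank_eq_finrank_span_cols]
  calc Module.finrank R (Submodule.span R (Set.range D.col))
      ≤ Module.finrank R (LinearMap.range Φ) :=
        Submodule.finrank_mono (Submodule.span_le.mpr (Set.range_subset_iff.mpr h))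
    _ ≤ Module.finrank R V := LinearMap.finrank_range_le Φ

section StateTransition

variable {R M U : Type*} [Semiring R] [AddCommMonoid M] [Module R M] [AddCommMonoid U]
  [Module R U] (f : M →ₗ[R] M) (g : U →ₗ[R] M)

def stateTransition : ℕ → (M × (ℕ → U)) →ₗ[R] M
  | 0 => LinearMap.fst R M (ℕ → U)
  | k + 1 => f ∘ₗ stateTransition k + g ∘ₗ LinearMap.proj k ∘ₗ LinearMap.snd R M (ℕ → U)

theorem stateTransition_eq_of_agree {x : ℕ → M} {u : ℕ → U}
    (hdyn : ∀ t, x (t + 1) = f (x t) + g (u t)) (s : ℕ) {w : ℕ → U} :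
    ∀ k, (∀ i < k, w i = u (s + i)) → x (s + k) = stateTransition f g k (x s, w)
  | 0, _ => rfl
  | k + 1, hw => by
    rw [← add_assoc, hdyn, stateTransition_eq_of_agree hdyn s k fun i hi => hw i (by omega),
      ← hw k k.lt_succ_self]
    rfl

end StateTransition

def pastInputs {R κ : Type*} [Semiring R] (L : ℕ) : (Fin L × κ → R) →ₗ[R] ℕ → κ → R where
  toFun U i c := if h : i < L then U (⟨L - 1 - i, by omega⟩, c) else 0
  map_add' U V := by ext i c; by_cases h : i < L <;> simp [h]
  map_smul' a U := by ext i c; by_cases h : i < L <;> simp [h]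

theorem pastInputs_uStack {m L t : ℕ} (u : ℕ → Fin m → ℝ) (ht : L ≤ t) {i : ℕ} (hi : i < L) :
    pastInputs L (uStack m L u t) i = u (t - L + i) := by
  ext c
  simp only [pastInputs, LinearMap.coe_mk, AddHom.coe_mk, dif_pos hi, uStack]
  congr 1
  omega

section InputXi

variable {n m p : ℕ} (L : ℕ) (A : Matrix (Fin n) (Fin n) ℝ) (B : Matrix (Fin n) (Fin m) ℝ)
  (C : Matrix (Fin p) (Fin n) ℝ)

/-- `(u(t), u_{t,L}, x(t-L)) ↦ (u(t), ξ_t)`. -/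
def inputXiOfState :
    ((Fin m → ℝ) × (Fin L × Fin m → ℝ) × (Fin n → ℝ)) →ₗ[ℝ]
      (Fin m ⊕ ((Fin L × Fin m) ⊕ (Fin L × Fin p)) → ℝ) :=
  LinearMap.pi fun
    | .inl a => LinearMap.proj a ∘ₗ LinearMap.fst ℝ _ _
    | .inr (.inl jb) => LinearMap.proj jb ∘ₗ LinearMap.fst ℝ _ _ ∘ₗ LinearMap.snd ℝ _ _
    | .inr (.inr (j, c)) => LinearMap.proj c ∘ₗ C.mulVecLin ∘ₗ
        stateTransition A.mulVecLin B.mulVecLin (L - 1 - j) ∘ₗ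
        (LinearMap.snd ℝ _ _ ∘ₗ LinearMap.snd ℝ _ _).prod
          (pastInputs L ∘ₗ LinearMap.fst ℝ _ _ ∘ₗ LinearMap.snd ℝ _ _)

theorem inputXiOfState_apply {u : ℕ → Fin m → ℝ} {x : ℕ → Fin n → ℝ} {y : ℕ → Fin p → ℝ}
    (hdyn : ∀ t : ℕ, x (t + 1) = A *ᵥ x t + B *ᵥ u t) (hout : ∀ t : ℕ, y t = C *ᵥ x t)
    {t : ℕ} (ht : L ≤ t) :
    inputXiOfState L A B C (u t, uStack m L u t, x (t - L)) =
      Sum.elim (u t) (xiState m p L u y t) := by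
  ext (a | jb | ⟨j, c⟩)
  · rfl
  · rfl
  · have hj : t - 1 - j = t - L + (L - 1 - j) := by omega
    have hx := stateTransition_eq_of_agree A.mulVecLin B.mulVecLin hdyn (t - L) (L - 1 - j)
      fun i hi => pastInputs_uStack u ht (by omega : i < L)
    simp only [xiState, Sum.elim_inr, yStack, hj, hout, hx]
    rfl

theorem finrank_inputXiOfState_domain :
    Module.finrank ℝ ((Fin m → ℝ) × (Fin L × Fin m → ℝ) × (Fin n → ℝ)) = m * (L + 1) + n := by
  simp only [Module.finrank_prod, Module.finrank_fintype_fun_eq_card, Fintype.card_fin,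
    Fintype.card_prod]
  ring

end InputXi

theorem input_xi_data_matrix_rank_deficient_general
    (n m p L N : ℕ)
    (A : Matrix (Fin n) (Fin n) ℝ) (B : Matrix (Fin n) (Fin m) ℝ)
    (C : Matrix (Fin p) (Fin n) ℝ)
    (u : ℕ → Fin m → ℝ) (x : ℕ → Fin n → ℝ) (y : ℕ → Fin p → ℝ)
    (hdyn : ∀ t : ℕ, x (t + 1) = A.mulVec (x t) + B.mulVec (u t))
    (hout : ∀ t : ℕ, y t = C.mulVec (x t))
    (ts : Fin N → ℕ) (hts : ∀ k, L ≤ ts k)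
    (D : Matrix (Fin m ⊕ ((Fin L × Fin m) ⊕ (Fin L × Fin p))) (Fin N) ℝ)
    (hD : ∀ r k, D r k = Sum.elim (u (ts k)) (xiState m p L u y (ts k)) r) :
    D.rank ≤ m * (L + 1) + n ∧ (n < p * L → D.rank < m * (L + 1) + p * L) := by
  have hcol : ∀ k, D.col k ∈ LinearMap.range (inputXiOfState L A B C) := fun k =>
    ⟨(u (ts k), uStack m L u (ts k), x (ts k - L)), by
      rw [inputXiOfState_apply L A B C hdyn hout (hts k)]
      ext r
      exact (hD r k).symm⟩
  have hrank : D.rank ≤ m * (L + 1) + n :=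
    finrank_inputXiOfState_domain L ▸ D.rank_le_finrank_of_col_mem_range _ hcol
  exact ⟨hrank, fun hpL => by omega⟩

theorem input_xi_data_matrix_rank_deficient
    (n m p L N : ℕ) (hL : 1 ≤ L)
    (A : Matrix (Fin n) (Fin n) ℝ) (B : Matrix (Fin n) (Fin m) ℝ)
    (C : Matrix (Fin p) (Fin n) ℝ)
    (u : ℕ → Fin m → ℝ) (x : ℕ → Fin n → ℝ) (y : ℕ → Fin p → ℝ)
    (hdyn : ∀ t : ℕ, x (t + 1) = A.mulVec (x t) + B.mulVec (u t))
    (hout : ∀ t : ℕ, y t = C.mulVec (x t))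
    (ts : Fin N → ℕ) (hts : ∀ k, L ≤ ts k)
    (D : Matrix (Fin m ⊕ ((Fin L × Fin m) ⊕ (Fin L × Fin p))) (Fin N) ℝ)
    (hD : ∀ r k, D r k = Sum.elim (u (ts k)) (xiState m p L u y (ts k)) r) :
    D.rank ≤ m * (L + 1) + n ∧ (n < p * L → D.rank < m * (L + 1) + p * L) :=
  input_xi_data_matrix_rank_deficient_general n m p L N A B C u x y hdyn hout ts hts D hD
end

section
/- (Gradient of the covariance-parameterized LQR cost.) Fix real matrices Ū ∈ ℝ^{m×q}, Z̄₁ ∈ ℝ^{d×q}, a symmetric matrix Q ∈ ℝ^{d×d}, and a symmetric matrix R ∈ ℝ^{m×m}. For V ∈ ℝ^{q×d} with spectral radius of Z̄₁·V strictly less than 1, define Σ(V) = ∑_{k=0}^{∞} (Z̄₁V)^k·((Z̄₁V)^k)ᵀ, P(V) = ∑_{k=0}^{∞} ((Z̄₁V)ᵀ)^k·(Q + Vᵀ·Ūᵀ·R·Ū·V)·(Z̄₁V)^k, and J(V) = Tr( (Q + Vᵀ·Ūᵀ·R·Ū·V)·Σ(V) ). Then at every such V, J is Fréchet differentiable and its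 derivative in direction Δ ∈ ℝ^{q×d} equals Tr(Gᵀ·Δ), where G = 2·(Ūᵀ·R·Ū + Z̄₁ᵀ·P(V)·Z̄₁)·V·Σ(V); equivalently, the gradient of J at V is ∇J(V) = 2(ŪᵀRŪ + Z̄₁ᵀP(V)Z̄₁)·V·Σ(V), where Σ(V) satisfies Σ = I_d + Z̄₁VΣVᵀZ̄₁ᵀ and P(V) satisfies P = Q + VᵀŪᵀRŪV + VᵀZ̄₁ᵀPZ̄₁V. -/
open Matrix Filter Topology

attribute [local instance]
  Matrix.linftyOpNormedRing Matrix.linftyOpNormedAddCommGroup Matrix.linftyOpNormedSpace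

/-- Closed-loop state covariance `Σ(V) = ∑_{k≥0} (Z̄₁V)^k ((Z̄₁V)^k)ᵀ`. -/
noncomputable def clSigma (d q : ℕ) (Z1 : Matrix (Fin d) (Fin q) ℝ)
    (V : Matrix (Fin q) (Fin d) ℝ) : Matrix (Fin d) (Fin d) ℝ :=
  ∑' k : ℕ, (Z1 * V) ^ k * ((Z1 * V) ^ k)ᵀ

/-- Value matrix `P(V) = ∑_{k≥0} ((Z̄₁V)ᵀ)^k (Q + VᵀŪᵀRŪV) (Z̄₁V)^k`. -/
noncomputable def clP (m d q : ℕ) (Ubar : Matrix (Fin m) (Fin q) ℝ)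
    (Z1 : Matrix (Fin d) (Fin q) ℝ) (Q : Matrix (Fin d) (Fin d) ℝ)
    (R : Matrix (Fin m) (Fin m) ℝ) (V : Matrix (Fin q) (Fin d) ℝ) :
    Matrix (Fin d) (Fin d) ℝ :=
  ∑' k : ℕ, ((Z1 * V)ᵀ) ^ k * (Q + Vᵀ * Ubarᵀ * R * Ubar * V) * (Z1 * V) ^ k

/-- Covariance-parameterized LQR cost `J(V) = Tr((Q + VᵀŪᵀRŪV) Σ(V))`. -/
noncomputable def Jcost (m d q : ℕ) (Ubar : Matrix (Fin m) (Fin q) ℝ)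
    (Z1 : Matrix (Fin d) (Fin q) ℝ) (Q : Matrix (Fin d) (Fin d) ℝ)
    (R : Matrix (Fin m) (Fin m) ℝ) (V : Matrix (Fin q) (Fin d) ℝ) : ℝ :=
  Matrix.trace ((Q + Vᵀ * Ubarᵀ * R * Ubar * V) * clSigma d q Z1 V)

/-!
Write `𝒯_A X = A X Aᵀ` for the Stein operator. The hypothesis on `‖(Z̄₁V)^k‖^{1/k}` forces
`(Z̄₁V)^k → 0`, hence `𝒯_{Z̄₁V}^k → 0` and `𝒯_{(Z̄₁V)ᵀ}^k → 0`. Some power of `𝒯_{Z̄₁V'}` then has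
norm `< 1` for all `V'` near `V`, so the Neumann series converge there and
`Σ(V') = (1 - 𝒯_{Z̄₁V'})⁻¹ 1`, `P(V) = (1 - 𝒯_{(Z̄₁V)ᵀ})⁻¹ W(V)` with `W(V) = Q + VᵀŪᵀRŪV`.
Near `V` the cost `J = tr(W Σ)` is thus built from polynomial maps and `Ring.inverse`, and its
derivative is `tr(Ẇ Σ) + tr(W (1 - 𝒯)⁻¹ 𝒯̇ Σ)`. Since `𝒯_{Aᵀ}` is the trace adjoint of `𝒯_A`, the
second term equals `tr(P 𝒯̇ Σ)`; the symmetry of `Σ`, `P` and `ŪᵀRŪ` collects both terms into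
`tr(Gᵀ Δ)`. The Stein equations for `Σ` and `P` are the identities `(1 - 𝒯)(1 - 𝒯)⁻¹ = 1`.
-/

section NormedRing

variable {R : Type*} [NormedRing R]

theorem summable_norm_pow_of_norm_pow_lt_one {x : R} {N : ℕ} (hN : N ≠ 0) (hx : ‖x ^ N‖ < 1) :
    Summable fun n => ‖x ^ n‖ := by
  have : NeZero N := ⟨hN⟩
  -- along a residue class, `‖x ^ (N * k + r)‖ ≤ ‖x ^ N‖ ^ k * ‖x ^ r‖` is geometric in `k`
  have hclass (a : ZMod N) :
      Summable ({n : ℕ | (n : ZMod N) = a}.indicator fun n => ‖x ^ n‖) := by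
    rw [← ZMod.natCast_zmod_val a, summable_indicator_mod_iff_summable]
    exact Summable.of_nonneg_of_le (fun _ => norm_nonneg _)
      (fun k => by rw [pow_add, pow_mul]; exact norm_mul_le _ _)
      ((summable_norm_geometric_of_norm_lt_one hx).mul_right ‖x ^ a.val‖)
  rw [Finset.sum_indicator_mod N fun n => ‖x ^ n‖, Finset.sum_fn]
  exact summable_sum fun a _ => hclass a

theorem eventually_summable_norm_pow {x : R} (hx : Tendsto (x ^ ·) atTop (𝓝 0)) :
    ∀ᶠ y in 𝓝 x, Summable fun n => ‖y ^ n‖ := by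
  obtain ⟨N, hN, hN0⟩ := ((tendsto_zero_iff_norm_tendsto_zero.mp hx).eventually_lt_const
    one_pos |>.and (eventually_ne_atTop 0)).exists
  filter_upwards [((continuous_pow N).norm.tendsto x).eventually_lt_const hN] with y hy
  exact summable_norm_pow_of_norm_pow_lt_one hN0 hy

theorem tendsto_pow_zero_of_tendsto_norm_pow_rpow_inv {x : R} {ρ : ℝ} (hρ : ρ < 1)
    (h : Tendsto (fun k : ℕ => ‖x ^ k‖ ^ (k : ℝ)⁻¹) atTop (𝓝 ρ)) :
    Tendsto (x ^ ·) atTop (𝓝 0) := by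
  obtain ⟨N, hN, hN0⟩ := ((h.eventually_lt_const hρ).and (eventually_ne_atTop 0)).exists
  rw [Real.rpow_lt_one_iff' (norm_nonneg _) (by positivity)] at hN
  exact tendsto_zero_iff_norm_tendsto_zero.mpr
    (summable_norm_pow_of_norm_pow_lt_one hN0 hN).tendsto_atTop_zero

end NormedRing

section TopologicalRing

variable {R : Type*} [Ring R] [TopologicalSpace R] [IsTopologicalRing R] [T2Space R]

theorem Summable.isUnit_one_sub {x : R} (h : Summable (x ^ ·)) : IsUnit (1 - x) :=
  ⟨⟨1 - x, ∑' n, x ^ n, h.one_sub_mul_tsum_pow, h.tsum_pow_mul_one_sub⟩, rfl⟩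

theorem Summable.hasSum_inverse_one_sub {x : R} (h : Summable (x ^ ·)) :
    HasSum (x ^ ·) (Ring.inverse (1 - x)) := by
  convert h.hasSum
  calc Ring.inverse (1 - x) = (∑' n, x ^ n) * (1 - x) * Ring.inverse (1 - x) := by
        rw [h.tsum_pow_mul_one_sub, one_mul]
    _ = ∑' n, x ^ n := Ring.mul_inverse_cancel_right _ _ h.isUnit_one_sub

end TopologicalRing

section Resolvent

variable {𝕜 E F : Type*} [NontriviallyNormedField 𝕜] [NormedAddCommGroup E] [NormedSpace 𝕜 E]
  [NormedAddCommGroup F] [NormedSpace 𝕜 F]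

theorem ContinuousLinearMap.inverse_one_sub_apply_eq {T : F →L[𝕜] F} (hT : IsUnit (1 - T))
    (v : F) : Ring.inverse (1 - T) v = v + T (Ring.inverse (1 - T) v) := by
  have h := congr($(Ring.mul_inverse_cancel _ hT) v)
  rw [mul_apply_eq_comp, _root_.sub_apply, one_apply_eq_self, one_apply_eq_self] at h
  rw [← sub_eq_iff_eq_add, h]

theorem HasFDerivAt.inverse_one_sub_apply [CompleteSpace F] {T : E → F →L[𝕜] F}
    {T' : E →L[𝕜] F →L[𝕜] F} {x : E} (hT : HasFDerivAt T T' x) (hu : IsUnit (1 - T x)) (v : F) :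
    HasFDerivAt (fun y => Ring.inverse (1 - T y) v)
      (((Ring.inverse (1 - T x)).comp
        (ContinuousLinearMap.apply 𝕜 F (Ring.inverse (1 - T x) v))).comp T') x := by
  obtain ⟨u, hu⟩ := hu
  have hinv := (hu ▸ hasFDerivAt_ringInverse (𝕜 := 𝕜) u).comp x (hT.const_sub 1)
  refine (hinv.clm_apply (hasFDerivAt_const v x)).congr_fderiv ?_
  ext Δ
  simp [← hu]

theorem LinearMap.exists_hasFDerivAt_bilin_diag [CompleteSpace 𝕜] [FiniteDimensional 𝕜 E]
    (b : E →ₗ[𝕜] E →ₗ[𝕜] F) (x : E) :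
    ∃ D : E →L[𝕜] F, HasFDerivAt (fun y => b y y) D x ∧ ∀ Δ, D Δ = b x Δ + b Δ x :=
  ⟨_, b.toContinuousBilinearMap.hasFDerivAt_of_bilinear (hasFDerivAt_id x) (hasFDerivAt_id x),
    fun Δ => by simp⟩

end Resolvent

namespace Matrix

variable {k n R : Type*} [Fintype k] [Fintype n] [CommRing R]

theorem trace_mul_eq_of_stein {A W P X Y : Matrix n n R} (hP : P = W + Aᵀ * P * A)
    (hY : Y = X + A * Y * Aᵀ) : (W * Y).trace = (P * X).trace := by
  rw [eq_sub_of_add_eq hP.symm, eq_sub_of_add_eq hY.symm, sub_mul, mul_sub, trace_sub,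
    trace_sub, Matrix.mul_assoc, Matrix.mul_assoc, trace_mul_comm Aᵀ, ← Matrix.mul_assoc P]
  simp only [Matrix.mul_assoc]

theorem trace_polarized_mul {N : Matrix k k R} {S : Matrix n n R} (hN : Nᵀ = N) (hS : Sᵀ = S)
    (V Δ : Matrix k n R) :
    ((Vᵀ * N * Δ + Δᵀ * N * V) * S).trace = 2 * ((N * V * S)ᵀ * Δ).trace := by
  have h₁ : (Vᵀ * N * Δ * S).trace = ((N * V * S)ᵀ * Δ).trace := by
    rw [trace_mul_comm, transpose_mul, transpose_mul, hN, hS]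
    simp only [Matrix.mul_assoc]
  have h₂ : (Δᵀ * N * V * S).trace = ((N * V * S)ᵀ * Δ).trace := by
    rw [← trace_transpose]
    simp [transpose_mul, hN, hS, Matrix.mul_assoc]
  rw [add_mul, trace_add, h₁, h₂, two_mul]

theorem trace_gradient_eq_first_variation {M : Matrix k k R} {Z : Matrix n k R}
    {P S : Matrix n n R} (hM : Mᵀ = M) (hP : Pᵀ = P) (hS : Sᵀ = S) (V Δ : Matrix k n R) :
    (((2 : R) • ((M + Zᵀ * P * Z) * V * S))ᵀ * Δ).trace =
      ((Vᵀ * M * Δ + Δᵀ * M * V) * S).trace +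
        (P * (Z * V * S * (Z * Δ)ᵀ + Z * Δ * S * (Z * V)ᵀ)).trace := by
  have hN : (Zᵀ * P * Z)ᵀ = Zᵀ * P * Z := by simp [transpose_mul, hP, Matrix.mul_assoc]
  have hcyc (X Y : Matrix k n R) :
      (P * (Z * X * S * (Z * Y)ᵀ)).trace = (Yᵀ * (Zᵀ * P * Z) * X * S).trace := by
    rw [transpose_mul, ← Matrix.mul_assoc P, trace_mul_comm]
    simp only [Matrix.mul_assoc]
  rw [mul_add, trace_add, hcyc, hcyc, add_comm (Δᵀ * (Zᵀ * P * Z) * V * S).trace, ← trace_add,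
    ← add_mul, trace_polarized_mul hM hS, trace_polarized_mul hN hS]
  simp only [Matrix.add_mul, smul_add, transpose_add, trace_add, transpose_smul, Matrix.smul_mul,
    trace_smul, smul_eq_mul]

end Matrix

attribute [local instance] Matrix.linftyOpNormedAlgebra

/-- The topology of the `L∞` operator norm on square matrices. It agrees with the product topology
only up to unfolding, and instance search needs it syntactically to see that
`Matrix n n ℝ →L[ℝ] Matrix n n ℝ` is a complete normed algebra. -/
noncomputable abbrev squareMatrixTopology (n : Type*) [Fintype n] :
    TopologicalSpace (Matrix n n ℝ) :=
  Matrix.linftyOpNormedAddCommGroup.toUniformSpace.toTopologicalSpace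

attribute [local instance] squareMatrixTopology

theorem HasFDerivAt.matrix_trace {n E : Type*} [Fintype n] [NormedAddCommGroup E]
    [NormedSpace ℝ E] {f : E → Matrix n n ℝ} {f' : E →L[ℝ] Matrix n n ℝ} {x : E}
    (hf : HasFDerivAt f f' x) :
    HasFDerivAt (fun y => (f y).trace)
      ((LinearMap.toContinuousLinearMap (Matrix.traceLinearMap n ℝ ℝ)).comp f') x :=
  (LinearMap.toContinuousLinearMap (Matrix.traceLinearMap n ℝ ℝ)).hasFDerivAt.comp x hf

section Stein

variable {n : Type*} [Fintype n] [DecidableEq n]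

theorem hasFDerivAt_trace_mul_inverse_one_sub_apply {E : Type*} [NormedAddCommGroup E]
    [NormedSpace ℝ E] {W : E → Matrix n n ℝ} {W' : E →L[ℝ] Matrix n n ℝ}
    {T : E → Matrix n n ℝ →L[ℝ] Matrix n n ℝ} {T' : E →L[ℝ] Matrix n n ℝ →L[ℝ] Matrix n n ℝ}
    {x : E} (hW : HasFDerivAt W W' x) (hT : HasFDerivAt T T' x) (hu : IsUnit (1 - T x))
    (X : Matrix n n ℝ) {D : E →L[ℝ] ℝ}
    (hD : ∀ Δ, D Δ = (W' Δ * Ring.inverse (1 - T x) X).trace +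
      (W x * Ring.inverse (1 - T x) (T' Δ (Ring.inverse (1 - T x) X))).trace) :
    HasFDerivAt (fun y => (W y * Ring.inverse (1 - T y) X).trace) D x := by
  refine ((hW.mul' (hT.inverse_one_sub_apply hu X)).matrix_trace).congr_fderiv ?_
  ext Δ
  simp [hD, add_comm]

noncomputable def steinOp (A : Matrix n n ℝ) : Matrix n n ℝ →L[ℝ] Matrix n n ℝ :=
  ContinuousLinearMap.mulLeftRight ℝ (Matrix n n ℝ) A Aᵀ

@[simp]
theorem steinOp_apply (A X : Matrix n n ℝ) : steinOp A X = A * X * Aᵀ := rfl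

theorem steinOp_pow (A : Matrix n n ℝ) (k : ℕ) : steinOp A ^ k = steinOp (A ^ k) := by
  induction k with
  | zero => ext1 X; simp
  | succ k ih =>
    ext1 X
    rw [pow_succ', mul_apply_eq_comp, ih]
    simp [pow_succ', Matrix.transpose_mul, Matrix.mul_assoc]

theorem continuous_steinOp : Continuous (steinOp : Matrix n n ℝ → _) := by
  unfold steinOp
  fun_prop

theorem tendsto_steinOp_pow_zero {A : Matrix n n ℝ} (h : Tendsto (A ^ ·) atTop (𝓝 0)) :
    Tendsto (steinOp A ^ ·) atTop (𝓝 0) := by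
  have h0 : steinOp (0 : Matrix n n ℝ) = 0 := by ext1 X; simp
  simpa only [steinOp_pow, h0, Function.comp_def] using (continuous_steinOp.tendsto 0).comp h

theorem tendsto_transpose_pow_zero {A : Matrix n n ℝ} (h : Tendsto (A ^ ·) atTop (𝓝 0)) :
    Tendsto (Aᵀ ^ ·) atTop (𝓝 0) := by
  have := (continuous_id.matrix_transpose.tendsto 0).comp h
  simp only [Function.comp_def, id, Matrix.transpose_pow, Matrix.transpose_zero] at this
  exact this

theorem hasSum_steinOp_pow_apply {A : Matrix n n ℝ} (h : Summable (steinOp A ^ ·))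
    (X : Matrix n n ℝ) :
    HasSum (fun k => A ^ k * X * (A ^ k)ᵀ) (Ring.inverse (1 - steinOp A) X) := by
  simpa [steinOp_pow] using h.hasSum_inverse_one_sub.mapL (ContinuousLinearMap.apply ℝ _ X)

theorem trace_mul_inverse_one_sub_steinOp {A : Matrix n n ℝ} (hA : IsUnit (1 - steinOp A))
    (hAt : IsUnit (1 - steinOp Aᵀ)) (W X : Matrix n n ℝ) :
    (W * Ring.inverse (1 - steinOp A) X).trace = (Ring.inverse (1 - steinOp Aᵀ) W * X).trace :=
  Matrix.trace_mul_eq_of_stein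
    (by simpa using ContinuousLinearMap.inverse_one_sub_apply_eq hAt W)
    (by simpa using ContinuousLinearMap.inverse_one_sub_apply_eq hA X)

noncomputable def steinOpBilin {k : Type*} [Fintype k] (Z : Matrix n k ℝ) :
    Matrix k n ℝ →ₗ[ℝ] Matrix k n ℝ →ₗ[ℝ] Matrix n n ℝ →L[ℝ] Matrix n n ℝ :=
  LinearMap.mk₂ ℝ (fun y z => ContinuousLinearMap.mulLeftRight ℝ _ (Z * y) (Z * z)ᵀ)
    (fun _ _ _ => by simp [Matrix.mul_add]) (fun _ _ _ => by simp)
    (fun _ _ _ => by simp [Matrix.mul_add]) (fun _ _ _ => by simp)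

end Stein

section LQR

variable {m d q : ℕ} (Ubar : Matrix (Fin m) (Fin q) ℝ) (Z1 : Matrix (Fin d) (Fin q) ℝ)
  (Q : Matrix (Fin d) (Fin d) ℝ) (R : Matrix (Fin m) (Fin m) ℝ) (V : Matrix (Fin q) (Fin d) ℝ)

noncomputable def inputCostBilin :
    Matrix (Fin q) (Fin d) ℝ →ₗ[ℝ] Matrix (Fin q) (Fin d) ℝ →ₗ[ℝ] Matrix (Fin d) (Fin d) ℝ :=
  LinearMap.mk₂ ℝ (fun y z => yᵀ * Ubarᵀ * R * Ubar * z)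
    (fun _ _ _ => by simp [Matrix.add_mul]) (fun _ _ _ => by simp)
    (fun _ _ _ => by simp [Matrix.mul_add]) (fun _ _ _ => by simp)

theorem clSigma_eq_inverse (h : Summable (steinOp (Z1 * V) ^ ·)) :
    clSigma d q Z1 V = Ring.inverse (1 - steinOp (Z1 * V)) 1 := by
  have := (hasSum_steinOp_pow_apply h 1).tsum_eq
  rw [clSigma]
  simp only [Matrix.mul_one] at this
  -- not `simpa`: the two sums live in defeq but syntactically different topologies
  exact this

theorem clP_eq_inverse (h : Summable (steinOp (Z1 * V)ᵀ ^ ·)) :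
    clP m d q Ubar Z1 Q R V =
      Ring.inverse (1 - steinOp (Z1 * V)ᵀ) (Q + Vᵀ * Ubarᵀ * R * Ubar * V) := by
  rw [clP, ← (hasSum_steinOp_pow_apply h _).tsum_eq]
  simp only [← Matrix.transpose_pow, Matrix.transpose_transpose]
  rfl

theorem clSigma_transpose : (clSigma d q Z1 V)ᵀ = clSigma d q Z1 V := by
  simp [clSigma, Matrix.transpose_tsum, Matrix.transpose_mul]

theorem clP_transpose (hQ : Qᵀ = Q) (hR : Rᵀ = R) :
    (clP m d q Ubar Z1 Q R V)ᵀ = clP m d q Ubar Z1 Q R V := by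
  simp [clP, Matrix.transpose_tsum, Matrix.transpose_mul, hQ, hR, Matrix.mul_assoc]

theorem clSigma_stein_eq (h : Summable (steinOp (Z1 * V) ^ ·)) :
    clSigma d q Z1 V = 1 + Z1 * V * clSigma d q Z1 V * Vᵀ * Z1ᵀ := by
  have := ContinuousLinearMap.inverse_one_sub_apply_eq h.isUnit_one_sub 1
  rw [← clSigma_eq_inverse Z1 V h] at this
  simpa [Matrix.transpose_mul, Matrix.mul_assoc] using this

theorem clP_stein_eq (h : Summable (steinOp (Z1 * V)ᵀ ^ ·)) :
    clP m d q Ubar Z1 Q R V = Q + Vᵀ * Ubarᵀ * R * Ubar * V +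
      Vᵀ * Z1ᵀ * clP m d q Ubar Z1 Q R V * Z1 * V := by
  have := ContinuousLinearMap.inverse_one_sub_apply_eq h.isUnit_one_sub
    (Q + Vᵀ * Ubarᵀ * R * Ubar * V)
  rw [← clP_eq_inverse Ubar Z1 Q R V h] at this
  simpa [Matrix.transpose_mul, Matrix.mul_assoc] using this

noncomputable def lqrGradient : Matrix (Fin q) (Fin d) ℝ :=
  (2 : ℝ) • ((Ubarᵀ * R * Ubar + Z1ᵀ * clP m d q Ubar Z1 Q R V * Z1) * V * clSigma d q Z1 V)

theorem eventually_summable_steinOp_pow (hA : Tendsto ((Z1 * V) ^ ·) atTop (𝓝 0)) :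
    ∀ᶠ V' in 𝓝 V, Summable (steinOp (Z1 * V') ^ ·) :=
  (((continuous_steinOp.comp (continuous_const.matrix_mul continuous_id)).tendsto V).eventually
    (eventually_summable_norm_pow (tendsto_steinOp_pow_zero hA))).mono fun _ h => h.of_norm

theorem hasFDerivAt_Jcost (hQ : Qᵀ = Q) (hR : Rᵀ = R)
    (hnear : ∀ᶠ V' in 𝓝 V, Summable (steinOp (Z1 * V') ^ ·))
    (hsumT : Summable (steinOp (Z1 * V)ᵀ ^ ·)) {f : Matrix (Fin q) (Fin d) ℝ →L[ℝ] ℝ}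
    (hf : ∀ Δ, f Δ = ((lqrGradient Ubar Z1 Q R V)ᵀ * Δ).trace) :
    HasFDerivAt (Jcost m d q Ubar Z1 Q R) f V := by
  have hsum := hnear.self_of_nhds
  have hJ : Jcost m d q Ubar Z1 Q R =ᶠ[𝓝 V] fun V' =>
      ((Q + V'ᵀ * Ubarᵀ * R * Ubar * V') * Ring.inverse (1 - steinOp (Z1 * V')) 1).trace := by
    filter_upwards [hnear] with V' h
    rw [Jcost, clSigma_eq_inverse Z1 V' h]
  obtain ⟨W', hW, hW'⟩ := (inputCostBilin Ubar R).exists_hasFDerivAt_bilin_diag V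
  replace hW : HasFDerivAt (fun V' => Q + V'ᵀ * Ubarᵀ * R * Ubar * V') W' V := hW.const_add Q
  obtain ⟨T', hT, hT'⟩ := (steinOpBilin Z1).exists_hasFDerivAt_bilin_diag V
  replace hT : HasFDerivAt (fun V' => steinOp (Z1 * V')) T' V := hT
  refine (hasFDerivAt_trace_mul_inverse_one_sub_apply hW hT hsum.isUnit_one_sub 1
    fun Δ => (hf Δ).trans ?_).congr_of_eventuallyEq hJ
  rw [trace_mul_inverse_one_sub_steinOp hsum.isUnit_one_sub hsumT.isUnit_one_sub
      (Q + Vᵀ * Ubarᵀ * R * Ubar * V), ← clP_eq_inverse Ubar Z1 Q R V hsumT,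
    ← clSigma_eq_inverse Z1 V hsum, hW', hT', lqrGradient,
    Matrix.trace_gradient_eq_first_variation (by simp [Matrix.transpose_mul, hR, Matrix.mul_assoc])
      (clP_transpose Ubar Z1 Q R V hQ hR) (clSigma_transpose Z1 V)]
  simp only [inputCostBilin, steinOpBilin, LinearMap.mk₂_apply, _root_.add_apply,
    ContinuousLinearMap.mulLeftRight_apply, Matrix.mul_assoc]

end LQR

theorem gradient_of_covariance_parameterized_LQR_cost
    (m d q : ℕ)
    (Ubar : Matrix (Fin m) (Fin q) ℝ) (Z1 : Matrix (Fin d) (Fin q) ℝ)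
    (Q : Matrix (Fin d) (Fin d) ℝ) (hQ : Qᵀ = Q)
    (R : Matrix (Fin m) (Fin m) ℝ) (hR : Rᵀ = R)
    (V : Matrix (Fin q) (Fin d) ℝ)
    (ρV : ℝ) (hρ : ρV < 1)
    (hlim : Tendsto (fun k : ℕ => ‖(Z1 * V) ^ k‖ ^ ((k : ℝ)⁻¹)) atTop (𝓝 ρV)) :
    ∃ f : Matrix (Fin q) (Fin d) ℝ →L[ℝ] ℝ,
      HasFDerivAt (Jcost m d q Ubar Z1 Q R) f V ∧
      (∀ Δ : Matrix (Fin q) (Fin d) ℝ,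
        f Δ =
          Matrix.trace
            (((2 : ℝ) •
                ((Ubarᵀ * R * Ubar + Z1ᵀ * clP m d q Ubar Z1 Q R V * Z1) * V *
                  clSigma d q Z1 V))ᵀ * Δ)) ∧
      clSigma d q Z1 V =
        1 + Z1 * V * clSigma d q Z1 V * Vᵀ * Z1ᵀ ∧
      clP m d q Ubar Z1 Q R V =
        Q + Vᵀ * Ubarᵀ * R * Ubar * V +
          Vᵀ * Z1ᵀ * clP m d q Ubar Z1 Q R V * Z1 * V := by
  have hA := tendsto_pow_zero_of_tendsto_norm_pow_rpow_inv hρ hlim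
  have hnear := eventually_summable_steinOp_pow Z1 V hA
  have hsumT : Summable (steinOp (Z1 * V)ᵀ ^ ·) :=
    (eventually_summable_norm_pow
      (tendsto_steinOp_pow_zero (tendsto_transpose_pow_zero hA))).self_of_nhds.of_norm
  exact ⟨LinearMap.toContinuousLinearMap (traceLinearMap _ ℝ ℝ ∘ₗ
      mulLeftLinearMap _ ℝ (lqrGradient Ubar Z1 Q R V)ᵀ),
    hasFDerivAt_Jcost Ubar Z1 Q R V hQ hR hnear hsumT fun Δ => rfl, fun Δ => rfl,
    clSigma_stein_eq Z1 V hnear.self_of_nhds, clP_stein_eq Ubar Z1 Q R V hsumT⟩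
end
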